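/- arXiv:1907.09074 — 2 statements merged into one kernel-verified Lean document; each statement's English description precedes it below -/
import Mathlib

section
/- Let (X,d) be a metric space satisfying the ⊠-inequalities and let x,y,z,w ∈ X be four distinct points such that {x,y,z,w} is over-distance with respect to both {x,w} and {y,w}. Then ∠̃xzy + ∠̃yzw > π and ∠̃xzy + ∠̃xzw > π. -/
/-!
If `∠̃xzy + ∠̃yzw ≤ π`, lay the hinges at `z` out in a plane: `y` on a ray from the origin,
`x` and `w` on opposite sides of it at angles `∠̃xzy` and `∠̃yzw`. Over-distance with respect
to `{x,w}` forces `∠̃xzw > ∠̃xzy + ∠̃yzw`. Laying out instead `y` and `w` on the same side of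
`x` at angles `∠̃xzy` and `∠̃xzw`, over-distance with respect to `{y,w}` forces
`∠̃yzw > ∠̃xzw - ∠̃xzy`, a contradiction. The second inequality is the first one with `x` and
`y` exchanged.
-/

noncomputable section

/-- A metric space satisfies the ⊠-inequalities. -/
def BoxIneq (X : Type*) [MetricSpace X] : Prop :=
  ∀ t ∈ Set.Icc (0:ℝ) 1, ∀ s ∈ Set.Icc (0:ℝ) 1, ∀ x y z w : X,
    0 ≤ (1 - t) * (1 - s) * dist x y ^ 2 + t * (1 - s) * dist y z ^ 2
      + t * s * dist z w ^ 2 + (1 - t) * s * dist w x ^ 2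
      - t * (1 - t) * dist x z ^ 2 - s * (1 - s) * dist y w ^ 2

/-- `{x,y,z,w}` is over-distance with respect to `{y,w}`: every configuration in `ℝ³`
realizing the five distances `d(x,y), d(y,z), d(z,x), d(x,w), d(w,z)` puts the points
corresponding to `y` and `w` strictly closer than `d(y,w)`.
Over-distance with respect to other pairs is obtained by permuting the arguments. -/
def OverDistance {X : Type*} [MetricSpace X] (x y z w : X) : Prop :=
  ∀ x' y' z' w' : EuclideanSpace ℝ (Fin 3),
    dist x' y' = dist x y → dist y' z' = dist y z → dist z' x' = dist z x →
    dist x' w' = dist x w → dist w' z' = dist w z →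
    dist y' w' < dist y w

/-- The comparison angle `∠̃abc` at `b`, computed by the law of cosines. -/
def compAngle {X : Type*} [MetricSpace X] (a b c : X) : ℝ :=
  Real.arccos ((dist b a ^ 2 + dist b c ^ 2 - dist a c ^ 2) / (2 * dist b a * dist b c))

open Real

def planePoint (r θ : ℝ) : EuclideanSpace ℝ (Fin 3) := !₂[r * cos θ, r * sin θ, 0]

lemma dist_planePoint_sq (r₁ θ₁ r₂ θ₂ : ℝ) :
    dist (planePoint r₁ θ₁) (planePoint r₂ θ₂) ^ 2
      = r₁ ^ 2 + r₂ ^ 2 - 2 * r₁ * r₂ * cos (θ₁ - θ₂) := by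
  rw [EuclideanSpace.dist_eq, sq_sqrt (by positivity)]
  simp only [planePoint, Fin.sum_univ_three, Real.dist_eq, sq_abs, Matrix.cons_val_zero,
    Matrix.cons_val_one, Matrix.cons_val_two, Matrix.head_cons, Matrix.tail_cons, cos_sub]
  linear_combination r₁ ^ 2 * sin_sq_add_cos_sq θ₁ + r₂ ^ 2 * sin_sq_add_cos_sq θ₂

section CompAngle

variable {X : Type*} [MetricSpace X]

lemma compAngle_comm (a b c : X) : compAngle a b c = compAngle c b a := by
  rw [compAngle, compAngle, dist_comm a c, add_comm (dist b a ^ 2), mul_assoc, mul_comm (dist b a),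
    ← mul_assoc]

lemma compAngle_mem_Icc (a b c : X) : compAngle a b c ∈ Set.Icc 0 π :=
  ⟨arccos_nonneg _, arccos_le_pi _⟩

lemma dist_sq_eq_compAngle {a b c : X} (hab : a ≠ b) (hcb : c ≠ b) :
    dist a c ^ 2 = dist b a ^ 2 + dist b c ^ 2 - 2 * dist b a * dist b c * cos (compAngle a b c) := by
  have hba : 0 < dist b a := dist_pos.2 hab.symm
  have hbc : 0 < dist b c := dist_pos.2 hcb.symm
  have h₁ : dist a c ≤ dist b a + dist b c := dist_comm b a ▸ dist_triangle a b c
  have h₂ : dist b a ≤ dist b c + dist a c := (dist_triangle b c a).trans_eq (by rw [dist_comm c a])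
  have h₃ : dist b c ≤ dist b a + dist a c := dist_triangle b a c
  have hlo : -1 ≤ (dist b a ^ 2 + dist b c ^ 2 - dist a c ^ 2) / (2 * dist b a * dist b c) := by
    rw [le_div_iff₀ (by positivity)]
    nlinarith [dist_nonneg (x := a) (y := c)]
  have hhi : (dist b a ^ 2 + dist b c ^ 2 - dist a c ^ 2) / (2 * dist b a * dist b c) ≤ 1 := by
    rw [div_le_iff₀ (by positivity)]
    nlinarith [dist_nonneg (x := a) (y := c)]
  rw [compAngle, cos_arccos hlo hhi]
  field_simp
  ring

/-- Lay the hinges at `z` out in a plane: `a` at angle `0`, `b` at angle `∠̃azb`, and `c` at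
any angle `θ` that reproduces `d(a,c)`. -/
lemma OverDistance.cos_compAngle_lt {a b z c : X} (h : OverDistance a b z c)
    (haz : a ≠ z) (hbz : b ≠ z) (hcz : c ≠ z) {θ : ℝ} (hθ : cos θ = cos (compAngle a z c)) :
    cos (compAngle b z c) < cos (compAngle a z b - θ) := by
  have hdist : ∀ {p q : EuclideanSpace ℝ (Fin 3)} {u v : X},
      dist p q ^ 2 = dist u v ^ 2 → dist p q = dist u v :=
    (sq_eq_sq₀ dist_nonneg dist_nonneg).1
  have key := h (planePoint (dist z a) 0) (planePoint (dist z b) (compAngle a z b))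
    (planePoint 0 0) (planePoint (dist z c) θ)
    (hdist <| by rw [dist_planePoint_sq, dist_sq_eq_compAngle haz hbz, zero_sub, cos_neg])
    (hdist <| by rw [dist_planePoint_sq, dist_comm b z]; ring)
    (hdist <| by rw [dist_planePoint_sq]; ring)
    (hdist <| by rw [dist_planePoint_sq, dist_sq_eq_compAngle haz hcz, zero_sub, cos_neg, hθ])
    (hdist <| by rw [dist_planePoint_sq, dist_comm c z]; ring)
  rw [← sq_lt_sq₀ dist_nonneg dist_nonneg, dist_planePoint_sq,
    dist_sq_eq_compAngle hbz hcz] at key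
  have hzb : 0 < dist z b := dist_pos.2 hbz.symm
  have hzc : 0 < dist z c := dist_pos.2 hcz.symm
  nlinarith [mul_pos hzb hzc]

end CompAngle

lemma pi_lt_add_of_cos_lt {α β γ : ℝ} (hα : α ∈ Set.Icc 0 π) (hβ : β ∈ Set.Icc 0 π)
    (hγ : γ ∈ Set.Icc 0 π) (h₁ : cos γ < cos (α + β)) (h₂ : cos β < cos (α - γ)) :
    π < α + β := by
  by_contra! hle
  have hαβ : α + β ∈ Set.Icc 0 π := ⟨add_nonneg hα.1 hβ.1, hle⟩
  have hlt : α + β < γ := (strictAntiOn_cos.lt_iff_gt hγ hαβ).1 h₁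
  have hγα : γ - α ∈ Set.Icc 0 π := ⟨by linarith [hβ.1], by linarith [hγ.2, hα.1]⟩
  rw [← cos_neg (α - γ), neg_sub] at h₂
  have hgt : γ - α < β := (strictAntiOn_cos.lt_iff_gt hβ hγα).1 h₂
  linarith

lemma pi_lt_compAngle_add_of_overDistance {X : Type*} [MetricSpace X] {x y z w : X}
    (hxz : x ≠ z) (hyz : y ≠ z) (hwz : w ≠ z)
    (hxw : OverDistance y x z w) (hyw : OverDistance x y z w) :
    π < compAngle x z y + compAngle y z w := by
  have h₁ := hxw.cos_compAngle_lt hyz hxz hwz (θ := -compAngle y z w) (cos_neg _)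
  have h₂ := hyw.cos_compAngle_lt hxz hyz hwz rfl
  rw [compAngle_comm y z x, sub_neg_eq_add] at h₁
  exact pi_lt_add_of_cos_lt (compAngle_mem_Icc _ _ _) (compAngle_mem_Icc _ _ _)
    (compAngle_mem_Icc _ _ _) h₁ h₂

theorem double_overDistance_angle_sums_general {X : Type*} [MetricSpace X]
    (x y z w : X)
    (hxz : x ≠ z)
    (hyz : y ≠ z) (hzw : z ≠ w)
    (hxw' : OverDistance y x z w) (hyw' : OverDistance x y z w) :
    Real.pi < compAngle x z y + compAngle y z w ∧
    Real.pi < compAngle x z y + compAngle x z w := by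
  refine ⟨pi_lt_compAngle_add_of_overDistance hxz hyz hzw.symm hxw' hyw', ?_⟩
  rw [compAngle_comm x z y]
  exact pi_lt_compAngle_add_of_overDistance hyz hxz hzw.symm hyw' hxw'

/-- Lemma 6.11: if `{x,y,z,w}` is over-distance with respect to both `{x,w}` and `{y,w}`,
then `∠̃xzy + ∠̃yzw > π` and `∠̃xzy + ∠̃xzw > π`. -/
theorem double_overDistance_angle_sums {X : Type*} [MetricSpace X] (hX : BoxIneq X)
    (x y z w : X)
    (hxy : x ≠ y) (hxz : x ≠ z) (hxw : x ≠ w)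
    (hyz : y ≠ z) (hyw : y ≠ w) (hzw : z ≠ w)
    (hxw' : OverDistance y x z w) (hyw' : OverDistance x y z w) :
    Real.pi < compAngle x z y + compAngle y z w ∧
    Real.pi < compAngle x z y + compAngle x z w :=
  double_overDistance_angle_sums_general x y z w hxz hyz hzw hxw' hyw'
end
end

section
/- Let (X,d) be a metric space satisfying the ⊠-inequalities and let x,y,z,w ∈ X be four distinct points with {x,y,z,w} under-distance with respect to both {x,w} and {y,w}. Suppose x',y',z' ∈ ℝ² satisfy ‖x'−y'‖ = d(x,y), ‖y'−z'‖ = d(y,z), ‖z'−x'‖ = d(z,x). Then x', y', z' are not collinear. -/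
/-!
Letting `s → 0` in the ⊠-inequality with `t = d(x,y)/d(x,z)` turns it into Stewart's theorem
as an inequality for metrically collinear triples `d(x,y) + d(y,z) = d(x,z)`.

If the comparison triangle of `x, y, z` were degenerate, one point `a` of it would lie between
the other two, `b` and `c`, and one of the two hypotheses makes `{a, b, c, w}` under-distance
with respect to `{b, w}` for such a labelling. Put `a, b, c` on a line in `ℝ³` and `w'` in a
plane through it at distances `d(a,w)`, `d(c,w)` from `a`, `c`. Stewart's theorem holds with
equality for this configuration, so comparing it with the metric inequality at the middle
point `a` gives `|b'w'| ≤ d(b,w)`, contradicting under-distance.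
-/

noncomputable section

/-- `{x,y,z,w}` is under-distance with respect to `{y,w}`: every configuration in `ℝ³`
realizing the five distances `d(x,y), d(y,z), d(z,x), d(x,w), d(w,z)` puts the points
corresponding to `y` and `w` strictly farther apart than `d(y,w)`.
Under-distance with respect to other pairs is obtained by permuting the arguments. -/
def UnderDistance {X : Type*} [MetricSpace X] (x y z w : X) : Prop :=
  ∀ x' y' z' w' : EuclideanSpace ℝ (Fin 3),
    dist x' y' = dist x y → dist y' z' = dist y z → dist z' x' = dist z x →
    dist x' w' = dist x w → dist w' z' = dist w z →
    dist y w < dist y' w'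

open Filter Set Topology

theorem le_of_forall_one_sub_mul_le {a b : ℝ} (h : ∀ s ∈ Ioo (0 : ℝ) 1, (1 - s) * a ≤ b) :
    a ≤ b := by
  have hlim : Tendsto (fun s : ℝ => (1 - s) * a) (𝓝[>] 0) (𝓝 a) := by
    have : Tendsto (fun s : ℝ => (1 - s) * a) (𝓝 0) (𝓝 ((1 - 0) * a)) :=
      ((continuous_const.sub continuous_id).mul continuous_const).tendsto 0
    simpa using this.mono_left nhdsWithin_le_nhds
  exact le_of_tendsto hlim (eventually_of_mem (Ioo_mem_nhdsGT one_pos) h)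

theorem dist_sq_vec3_of_third_zero (a b a' b' : ℝ) :
    dist !₂[a, b, 0] !₂[a', b', 0] ^ 2 = (a - a') ^ 2 + (b - b') ^ 2 := by
  rw [EuclideanSpace.dist_eq, Real.sq_sqrt (by positivity)]
  simp [Fin.sum_univ_three, Real.dist_eq, sq_abs]

theorem dist_vec3_of_third_zero_eq {a b a' b' r : ℝ} (hr : 0 ≤ r)
    (h : (a - a') ^ 2 + (b - b') ^ 2 = r ^ 2) : dist !₂[a, b, 0] !₂[a', b', 0] = r := by
  rw [← pow_left_inj₀ dist_nonneg hr two_ne_zero, dist_sq_vec3_of_third_zero, h]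

theorem exists_planar_apex {L p q : ℝ} (hL : 0 < L) (h₁ : L ≤ p + q) (h₂ : p ≤ L + q)
    (h₃ : q ≤ p + L) :
    ∃ u h : ℝ, u ^ 2 + h ^ 2 = p ^ 2 ∧ (u - L) ^ 2 + h ^ 2 = q ^ 2 := by
  set u := (L ^ 2 + p ^ 2 - q ^ 2) / (2 * L)
  have hu : u ^ 2 ≤ p ^ 2 := by
    rw [div_pow, div_le_iff₀ (by positivity)]
    nlinarith [mul_nonneg (mul_nonneg (sub_nonneg.2 h₁) (sub_nonneg.2 h₂))
      (mul_nonneg (sub_nonneg.2 h₃) (by linarith : 0 ≤ L + p + q))]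
  refine ⟨u, √(p ^ 2 - u ^ 2), ?_, ?_⟩ <;> rw [Real.sq_sqrt (sub_nonneg.2 hu)]
  · ring
  · simp only [u]
    field_simp
    ring

section

variable {X : Type*} [MetricSpace X]

theorem BoxIneq.dist_sq_mul_dist_le (hX : BoxIneq X) {x y z : X} (w : X)
    (h : dist x y + dist y z = dist x z) :
    dist y w ^ 2 * dist x z ≤
      dist y z * dist w x ^ 2 + dist x y * dist z w ^ 2 - dist x y * dist y z * dist x z := by
  rcases (dist_nonneg : 0 ≤ dist x z).eq_or_lt with hD | hD
  · obtain ⟨hxy, hyz⟩ : dist x y = 0 ∧ dist y z = 0 := by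
      constructor <;> linarith [dist_nonneg (x := x) (y := y), dist_nonneg (x := y) (y := z)]
    simp [← hD, hxy, hyz]
  refine le_of_forall_one_sub_mul_le fun s hs => ?_
  have ht : dist x y / dist x z ∈ Icc (0 : ℝ) 1 :=
    ⟨by positivity, div_le_one_of_le₀ (by linarith [dist_nonneg (x := y) (y := z)]) hD.le⟩
  have hbox := hX _ ht s (Ioo_subset_Icc_self hs) x y z w
  have hscaled : 0 ≤ s * (dist y z * dist w x ^ 2 + dist x y * dist z w ^ 2
      - dist x y * dist y z * dist x z - (1 - s) * (dist y w ^ 2 * dist x z)) := by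
    rw [← h] at hD hbox ⊢
    refine (mul_nonneg hD.le hbox).trans_eq ?_
    field_simp
    ring
  linarith [(mul_nonneg_iff_of_pos_left hs.1).mp hscaled]

theorem UnderDistance.symm {a b c w : X} (hU : UnderDistance a b c w) :
    UnderDistance c b a w := by
  intro a' b' c' w' hab hbc hca haw hwc
  refine hU c' b' a' w' ?_ ?_ ?_ ?_ ?_ <;>
    simp only [dist_comm] at * <;> assumption

theorem UnderDistance.dist_add_dist_ne (hX : BoxIneq X) {a b c w : X}
    (hU : UnderDistance a b c w) (hac : a ≠ c) : dist b a + dist a c ≠ dist b c := by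
  intro hbac
  have hL : 0 < dist a c := dist_pos.2 hac
  obtain ⟨u, h, hp, hq⟩ := exists_planar_apex hL (dist_triangle a w c)
    (by linarith [dist_triangle a c w, dist_comm c w])
    (by linarith [dist_triangle w a c, dist_comm w a])
  have hcomp := hU !₂[0, 0, 0] !₂[-dist a b, 0, 0] !₂[dist a c, 0, 0] !₂[u, h, 0]
    (dist_vec3_of_third_zero_eq dist_nonneg (by ring))
    (dist_vec3_of_third_zero_eq dist_nonneg (by rw [← hbac, dist_comm b a]; ring))
    (dist_vec3_of_third_zero_eq dist_nonneg (by rw [dist_comm c a]; ring))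
    (dist_vec3_of_third_zero_eq dist_nonneg (by rw [← hp]; ring))
    (dist_vec3_of_third_zero_eq dist_nonneg (by rw [← hq]; ring))
  have hlt : dist b w ^ 2 < (dist a b + u) ^ 2 + h ^ 2 := by
    have := pow_lt_pow_left₀ hcomp dist_nonneg two_ne_zero
    rwa [dist_sq_vec3_of_third_zero, neg_sub_left, neg_sq, add_comm u, zero_sub, neg_sq] at this
  have hstewart := hX.dist_sq_mul_dist_le w hbac
  rw [← hbac, dist_comm b a, dist_comm c w, dist_comm w b] at hstewart
  have hu : 2 * u * dist a c = dist a c ^ 2 + dist a w ^ 2 - dist w c ^ 2 := by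
    linear_combination hp - hq
  nlinarith [mul_lt_mul_of_pos_left hlt hL, congrArg (dist a b * ·) hu]

end

theorem underDistance_not_collinear_general {X : Type*} [MetricSpace X] (hX : BoxIneq X)
    (x y z w : X)
    (hxz : x ≠ z)
    (hyz : y ≠ z)
    (hxw' : UnderDistance y x z w) (hyw' : UnderDistance x y z w)
    (x' y' z' : EuclideanSpace ℝ (Fin 2))
    (h1 : dist x' y' = dist x y) (h2 : dist y' z' = dist y z)
    (h3 : dist z' x' = dist z x) :
    ¬ Collinear ℝ ({x', y', z'} : Set (EuclideanSpace ℝ (Fin 2))) := by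
  intro hcol
  rcases hcol.wbtw_or_wbtw_or_wbtw with hy | hz | hx
  · exact hxw'.dist_add_dist_ne hX hyz
      (by linarith [hy.dist_add_dist, dist_comm x y, dist_comm x' z', dist_comm z x])
  · exact hyw'.symm.dist_add_dist_ne hX hxz.symm
      (by linarith [hz.dist_add_dist, dist_comm x z, dist_comm x' y', dist_comm x y])
  · exact hyw'.dist_add_dist_ne hX hxz
      (by linarith [hx.dist_add_dist, dist_comm x y, dist_comm y' z', dist_comm z x])

/-- Corollary 6.10: if `{x,y,z,w}` is under-distance with respect to both `{x,w}` and
`{y,w}`, then any planar comparison triangle for `x,y,z` is nondegenerate. -/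
theorem underDistance_not_collinear {X : Type*} [MetricSpace X] (hX : BoxIneq X)
    (x y z w : X)
    (hxy : x ≠ y) (hxz : x ≠ z) (hxw : x ≠ w)
    (hyz : y ≠ z) (hyw : y ≠ w) (hzw : z ≠ w)
    (hxw' : UnderDistance y x z w) (hyw' : UnderDistance x y z w)
    (x' y' z' : EuclideanSpace ℝ (Fin 2))
    (h1 : dist x' y' = dist x y) (h2 : dist y' z' = dist y z)
    (h3 : dist z' x' = dist z x) :
    ¬ Collinear ℝ ({x', y', z'} : Set (EuclideanSpace ℝ (Fin 2))) :=
  underDistance_not_collinear_general hX x y z w hxz hyz hxw' hyw' x' y' z' h1 h2 h3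
end
end
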